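/- arXiv:1707.00203 — 8 statements merged into one kernel-verified Lean document; each statement's English description precedes it below -/
import Mathlib

section
/- Let (Ω, F, P) be a probability space and (ξ_n)_{n≥1} a sequence of real-valued random variables such that: (i) there exists M > 0 with |ξ_n| ≤ M almost surely for every n; (ii) the sequence is finitely dependent, i.e. there exists K ∈ ℕ such that for every n and every K₁ ≥ K the random variables ξ_n and ξ_{n+K₁} are independent; (iii) there is a constant c with E[ξ_n] ≥ c for every n. Then almost surely liminf_{N→∞} (1/N) Σ_{n=1}^{N} ξ_n ≥ c. -/
/-!
Centre the variables, `S N = ∑_{n ≤ N} (ξ n - 𝔼 ξ n)`. Covariances vanish between indices at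
distance at least `K` and are at most `M²` otherwise, so `Var (S N) ≤ (2K+1) M² N`. Along the
squares this gives `∑ₘ 𝔼 (S (m²) / m²)² < ∞`, hence `S (m²) / m² → 0` almost surely. Since the
increments of `S` are bounded by `2M` and consecutive squares are only `O(√N)` apart, `S N / N → 0`,
and the averages of the means are at least `c`.
-/

open MeasureTheory Filter Topology ProbabilityTheory Finset

theorem Nat.tendsto_sqrt_atTop : Tendsto Nat.sqrt atTop atTop :=
  tendsto_atTop_atTop.2 fun k => ⟨k * k, fun _ hN => Nat.le_sqrt.2 hN⟩

theorem tendsto_div_of_tendsto_div_sq {S : ℕ → ℝ} {L : ℝ}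
    (hinc : ∀ n, |S (n + 1) - S n| ≤ L)
    (hsq : Tendsto (fun m : ℕ => S (m ^ 2) / (m : ℝ) ^ 2) atTop (𝓝 0)) :
    Tendsto (fun N : ℕ => S N / N) atTop (𝓝 0) := by
  have hL : 0 ≤ L := (abs_nonneg _).trans (hinc 0)
  have hlip : ∀ a b, a ≤ b → |S b - S a| ≤ L * (b - a) := by
    intro a b hab
    calc |S b - S a| = dist (S a) (S b) := by rw [Real.dist_eq, abs_sub_comm]
      _ ≤ ∑ i ∈ Ico a b, dist (S i) (S (i + 1)) := dist_le_Ico_sum_dist S hab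
      _ = ∑ i ∈ Ico a b, |S (i + 1) - S i| := by simp only [Real.dist_eq, abs_sub_comm]
      _ ≤ ∑ i ∈ Ico a b, L := sum_le_sum fun i _ => hinc i
      _ = L * (b - a) := by simp [Nat.cast_sub hab, mul_comm]
  have hbound :
      Tendsto (fun m : ℕ => |S (m ^ 2) / (m : ℝ) ^ 2| + 3 * L / m) atTop (𝓝 0) := by
    simpa using hsq.abs.add (tendsto_const_div_atTop_nhds_zero_nat (3 * L))
  refine (tendsto_zero_iff_abs_tendsto_zero _).2 <|
    squeeze_zero' (.of_forall fun N => abs_nonneg _) ?_ (hbound.comp Nat.tendsto_sqrt_atTop)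
  filter_upwards [eventually_ge_atTop 1] with N hN
  set m := Nat.sqrt N
  have hm : (1 : ℝ) ≤ m := by exact_mod_cast Nat.le_sqrt.2 hN
  have hmN : ((m ^ 2 : ℕ) : ℝ) ≤ N := by exact_mod_cast Nat.sqrt_le' N
  have hNm : (N : ℝ) < ((m : ℝ) + 1) ^ 2 := by exact_mod_cast Nat.lt_succ_sqrt' N
  -- `N - m² < 2m + 1 ≤ 3m`
  have hgap : |S N| ≤ |S (m ^ 2)| + 3 * L * m := by
    have := hlip _ _ (Nat.sqrt_le' N)
    have := abs_sub_abs_le_abs_sub (S N) (S (m ^ 2))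
    push_cast at *
    nlinarith
  calc |S N / N| = |S N| / N := by rw [abs_div, Nat.abs_cast]
    _ ≤ (|S (m ^ 2)| + 3 * L * m) / (m : ℝ) ^ 2 := by
        gcongr
        exact_mod_cast hmN
    _ = |S (m ^ 2) / (m : ℝ) ^ 2| + 3 * L / m := by
        rw [abs_div, abs_of_pos (by positivity : (0 : ℝ) < (m : ℝ) ^ 2)]
        field_simp

theorem le_liminf_of_le_add_of_tendsto {α : Type*} {f : Filter α} [f.NeBot] {u v : α → ℝ}
    {c B : ℝ} (hv : Tendsto v f (𝓝 0)) (hle : ∀ᶠ x in f, c + v x ≤ u x)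
    (hub : ∀ᶠ x in f, u x ≤ B) : c ≤ f.liminf u := calc
  c = f.liminf (fun x => c + v x) := by
      refine (Tendsto.liminf_eq ?_).symm
      simpa using tendsto_const_nhds.add hv
  _ ≤ f.liminf u := liminf_le_liminf hle (tendsto_const_nhds.add hv).isBoundedUnder_ge
      (isCoboundedUnder_ge_of_eventually_le f hub)

theorem sum_sum_le_of_banded (s : Finset ℕ) (a : ℕ → ℕ → ℝ) {C : ℝ} (K : ℕ)
    (hC : ∀ i j, a i j ≤ C) (hfar : ∀ i j, i + K ≤ j ∨ j + K ≤ i → a i j = 0) :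
    ∑ i ∈ s, ∑ j ∈ s, a i j ≤ (2 * K + 1) * C * #s := by
  have hC0 : 0 ≤ C := hfar 0 K (.inl (zero_add K).le) ▸ hC 0 K
  have hrow : ∀ i, ∑ j ∈ s, a i j ≤ (2 * K + 1) * C := fun i => calc
    ∑ j ∈ s, a i j ≤ ∑ j ∈ s, if j ∈ Icc (i - K) (i + K) then C else 0 := by
        gcongr with j
        split_ifs with hj
        · exact hC i j
        · exact (hfar i j (by simp only [mem_Icc] at hj; omega)).le
    _ = #(s ∩ Icc (i - K) (i + K)) * C := by rw [sum_ite_mem, sum_const, nsmul_eq_mul]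
    _ ≤ (2 * K + 1 : ℕ) * C := by
        gcongr
        calc #(s ∩ Icc (i - K) (i + K)) ≤ #(Icc (i - K) (i + K)) :=
              card_le_card inter_subset_right
          _ ≤ 2 * K + 1 := by simp only [Nat.card_Icc]; omega
    _ = (2 * K + 1) * C := by push_cast; ring
  calc ∑ i ∈ s, ∑ j ∈ s, a i j ≤ ∑ _i ∈ s, (2 * K + 1) * C := sum_le_sum fun i _ => hrow i
    _ = (2 * K + 1) * C * #s := by rw [sum_const, nsmul_eq_mul, mul_comm]

section

variable {Ω : Type*} [MeasurableSpace Ω] {μ : Measure Ω}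

theorem memLp_of_abs_le [IsFiniteMeasure μ] {X : Ω → ℝ} {M : ℝ} (hX : AEMeasurable X μ)
    (hXM : ∀ᵐ ω ∂μ, |X ω| ≤ M) (p : ENNReal) : MemLp X p μ :=
  .of_bound hX.aestronglyMeasurable M (by simpa using hXM)

theorem ae_summable_of_summable_integral {ι : Type*} [Countable ι] {f : ι → Ω → ℝ}
    (hf_nonneg : ∀ i, 0 ≤ᵐ[μ] f i) (hf : ∀ i, Integrable (f i) μ)
    (hsum : Summable fun i => ∫ ω, f i ω ∂μ) :
    ∀ᵐ ω ∂μ, Summable fun i => f i ω := by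
  have hlint : ∫⁻ ω, ∑' i, ENNReal.ofReal (f i ω) ∂μ ≠ ⊤ := by
    rw [lintegral_tsum fun i => (hf i).aemeasurable.ennreal_ofReal]
    simp_rw [← ofReal_integral_eq_lintegral_ofReal (hf _) (hf_nonneg _)]
    rw [← ENNReal.ofReal_tsum_of_nonneg (fun i => integral_nonneg_of_ae (hf_nonneg i)) hsum]
    exact ENNReal.ofReal_ne_top
  filter_upwards [ae_lt_top' (by fun_prop) hlint, ae_all_iff.2 hf_nonneg] with ω hω hω_nonneg
  simpa [ENNReal.toReal_ofReal (hω_nonneg _)] using ENNReal.summable_toReal hω.ne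

theorem ae_tendsto_zero_of_summable_integral_sq {T : ℕ → Ω → ℝ}
    (hT : ∀ m, Integrable (fun ω => T m ω ^ 2) μ)
    (hsum : Summable fun m => ∫ ω, T m ω ^ 2 ∂μ) :
    ∀ᵐ ω ∂μ, Tendsto (fun m => T m ω) atTop (𝓝 0) := by
  filter_upwards [ae_summable_of_summable_integral (fun m => .of_forall fun ω => sq_nonneg _)
    hT hsum] with ω hω
  refine (tendsto_zero_iff_abs_tendsto_zero _).2 ?_
  simpa [Function.comp_def, Real.sqrt_sq_eq_abs] using hω.tendsto_atTop_zero.sqrt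

theorem covariance_le_sq_of_abs_le [IsProbabilityMeasure μ] {X Y : Ω → ℝ} {M : ℝ}
    (hX : AEMeasurable X μ) (hY : AEMeasurable Y μ)
    (hXM : ∀ᵐ ω ∂μ, |X ω| ≤ M) (hYM : ∀ᵐ ω ∂μ, |Y ω| ≤ M) :
    cov[X, Y; μ] ≤ M ^ 2 := by
  have hvar :
      ∀ Z : Ω → ℝ, AEMeasurable Z μ → (∀ᵐ ω ∂μ, |Z ω| ≤ M) → Var[Z; μ] ≤ M ^ 2 :=
    fun Z hZ hZM => by
      simpa using variance_le_sq_of_bounded (hZM.mono fun ω h => abs_le.1 h) hZ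
  -- Popoviciu bounds both variances by `M²`, and `0 ≤ Var (X - Y) = Var X - 2 cov + Var Y`.
  have hsub := variance_sub (memLp_of_abs_le hX hXM 2) (memLp_of_abs_le hY hYM 2)
  linarith [variance_nonneg (X - Y) μ, hvar X hX hXM, hvar Y hY hYM]

theorem variance_sum_le_of_indep_of_le_add [IsProbabilityMeasure μ] {ξ : ℕ → Ω → ℝ}
    {M : ℝ} {K : ℕ} (hξ : ∀ n, AEMeasurable (ξ n) μ) (hM : ∀ n, ∀ᵐ ω ∂μ, |ξ n ω| ≤ M)
    (hindep : ∀ i j, i + K ≤ j → IndepFun (ξ i) (ξ j) μ) (s : Finset ℕ) :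
    Var[fun ω => ∑ i ∈ s, ξ i ω; μ] ≤ (2 * K + 1) * M ^ 2 * #s := by
  have hL2 : ∀ n, MemLp (ξ n) 2 μ := fun n => memLp_of_abs_le (hξ n) (hM n) 2
  rw [variance_fun_sum' fun i _ => hL2 i]
  refine sum_sum_le_of_banded s _ K
    (fun i j => covariance_le_sq_of_abs_le (hξ i) (hξ j) (hM i) (hM j)) ?_
  rintro i j (hij | hji)
  · exact (hindep i j hij).covariance_eq_zero (hL2 i) (hL2 j)
  · rw [covariance_comm]
    exact (hindep j i hji).covariance_eq_zero (hL2 j) (hL2 i)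

theorem ae_tendsto_sum_sub_sum_integral_div [IsProbabilityMeasure μ] {ξ : ℕ → Ω → ℝ}
    {M : ℝ} {K : ℕ} (hξ : ∀ n, AEMeasurable (ξ n) μ) (hM : ∀ n, ∀ᵐ ω ∂μ, |ξ n ω| ≤ M)
    (hindep : ∀ i j, i + K ≤ j → IndepFun (ξ i) (ξ j) μ) :
    ∀ᵐ ω ∂μ, Tendsto (fun N : ℕ =>
      (∑ n ∈ Icc 1 N, ξ n ω - ∑ n ∈ Icc 1 N, ∫ ω', ξ n ω' ∂μ) / N) atTop (𝓝 0) := by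
  set S : ℕ → Ω → ℝ := fun N ω =>
    ∑ n ∈ Icc 1 N, ξ n ω - ∑ n ∈ Icc 1 N, ∫ ω', ξ n ω' ∂μ
  have hL2 : ∀ n, MemLp (ξ n) 2 μ := fun n => memLp_of_abs_le (hξ n) (hM n) 2
  have hS_sq : ∀ N, ∫ ω, S N ω ^ 2 ∂μ ≤ (2 * K + 1) * M ^ 2 * N := fun N => calc
    ∫ ω, S N ω ^ 2 ∂μ = Var[fun ω => ∑ n ∈ Icc 1 N, ξ n ω; μ] := by
        rw [variance_eq_integral (by fun_prop),
          integral_finsetSum _ fun n _ => (hL2 n).integrable one_le_two]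
    _ ≤ (2 * K + 1) * M ^ 2 * N := by
        simpa using variance_sum_le_of_indep_of_le_add hξ hM hindep (Icc 1 N)
  set T : ℕ → Ω → ℝ := fun m ω => S (m ^ 2) ω / (m : ℝ) ^ 2
  have hT_sq :
      ∀ m, ∫ ω, T m ω ^ 2 ∂μ ≤ (2 * K + 1) * M ^ 2 * ((1 : ℝ) / m ^ 2) := fun m => calc
    ∫ ω, T m ω ^ 2 ∂μ = (∫ ω, S (m ^ 2) ω ^ 2 ∂μ) / ((m : ℝ) ^ 2) ^ 2 := by
        simp only [T, div_pow]
        exact integral_div _ _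
    _ ≤ (2 * K + 1) * M ^ 2 * (m ^ 2 : ℕ) / ((m : ℝ) ^ 2) ^ 2 := by
        gcongr
        exact hS_sq _
    _ = (2 * K + 1) * M ^ 2 * ((1 : ℝ) / m ^ 2) := by
        rcases eq_or_ne (m : ℝ) 0 with hm | hm
        · simp [hm]
        · field_simp
          push_cast
          ring
  have hT_int : ∀ m, Integrable (fun ω => T m ω ^ 2) μ := fun m => by
    simpa only [T, S, div_pow, Pi.sub_apply] using
      (((memLp_finsetSum _ fun n _ => hL2 n).sub (memLp_const _)).integrable_sq).div_const _
  have hT : ∀ᵐ ω ∂μ, Tendsto (fun m => T m ω) atTop (𝓝 0) :=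
    ae_tendsto_zero_of_summable_integral_sq hT_int <|
      .of_nonneg_of_le (fun m => integral_nonneg fun ω => sq_nonneg _) hT_sq
        ((Real.summable_one_div_nat_pow.2 one_lt_two).mul_left _)
  filter_upwards [hT, ae_all_iff.2 hM] with ω hTω hMω
  refine tendsto_div_of_tendsto_div_sq (L := 2 * M) (fun N => ?_) hTω
  have hmean : |∫ ω', ξ (N + 1) ω' ∂μ| ≤ M := by
    have := norm_integral_le_of_norm_le_const (f := ξ (N + 1)) (by simpa using hM (N + 1))
    rwa [probReal_univ, mul_one, Real.norm_eq_abs] at this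
  simp only [sum_Icc_succ_top (Nat.le_add_left 1 N)]
  calc _ = |ξ (N + 1) ω - ∫ ω', ξ (N + 1) ω' ∂μ| := by ring_nf
    _ ≤ 2 * M := by
        linarith [abs_sub (ξ (N + 1) ω) (∫ ω', ξ (N + 1) ω' ∂μ), hMω (N + 1)]

end

theorem finitely_dependent_bounded_liminf_general
    {Ω : Type*} [MeasurableSpace Ω] (P : Measure Ω) [IsProbabilityMeasure P]
    (ξ : ℕ → Ω → ℝ) (hmeas : ∀ n, Measurable (ξ n))
    (M : ℝ) (hbdd : ∀ n, ∀ᵐ ω ∂P, |ξ n ω| ≤ M)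
    (K : ℕ) (hindep : ∀ n K₁, K ≤ K₁ →
      ProbabilityTheory.IndepFun (ξ n) (ξ (n + K₁)) P)
    (c : ℝ) (hc : ∀ n, c ≤ ∫ ω, ξ n ω ∂P) :
    ∀ᵐ ω ∂P, c ≤ atTop.liminf
      (fun N : ℕ => (1 / (N : ℝ)) * ∑ n ∈ Finset.Icc 1 N, ξ n ω) := by
  have hindep' : ∀ i j, i + K ≤ j → IndepFun (ξ i) (ξ j) P := fun i j hij => by
    simpa [Nat.add_sub_cancel' (le_of_add_le_left hij)] using hindep i (j - i) (by omega)
  filter_upwards [ae_tendsto_sum_sub_sum_integral_div (fun n => (hmeas n).aemeasurable) hbdd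
    hindep', ae_all_iff.2 hbdd] with ω hω hbdd_ω
  refine le_liminf_of_le_add_of_tendsto hω ?_ (B := M) ?_ <;>
    filter_upwards [eventually_ge_atTop 1] with N hN <;>
    have hN : (0 : ℝ) < N := by exact_mod_cast hN
  · have hmean : N * c ≤ ∑ n ∈ Icc 1 N, ∫ ω, ξ n ω ∂P := by
      simpa using card_nsmul_le_sum (Icc 1 N) _ c fun n _ => hc n
    rw [one_div_mul_eq_div, le_div_iff₀ hN, add_mul, div_mul_cancel₀ _ hN.ne']
    linarith
  · have hsum : ∑ n ∈ Icc 1 N, ξ n ω ≤ N * M := by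
      simpa using sum_le_sum fun n (_ : n ∈ Icc 1 N) => (abs_le.1 (hbdd_ω n)).2
    rwa [one_div_mul_eq_div, div_le_iff₀ hN, mul_comm]

/-- Lemma 5.2: a finitely dependent sequence of a.s. uniformly bounded random variables
whose expectations are all at least `c` satisfies
`liminf_{N→∞} (1/N) ∑_{n=1}^N ξ_n ≥ c` almost surely. -/
theorem finitely_dependent_bounded_liminf
    {Ω : Type*} [MeasurableSpace Ω] (P : Measure Ω) [IsProbabilityMeasure P]
    (ξ : ℕ → Ω → ℝ) (hmeas : ∀ n, Measurable (ξ n))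
    (M : ℝ) (hM : 0 < M) (hbdd : ∀ n, ∀ᵐ ω ∂P, |ξ n ω| ≤ M)
    (K : ℕ) (hindep : ∀ n K₁, K ≤ K₁ →
      ProbabilityTheory.IndepFun (ξ n) (ξ (n + K₁)) P)
    (c : ℝ) (hc : ∀ n, c ≤ ∫ ω, ξ n ω ∂P) :
    ∀ᵐ ω ∂P, c ≤ atTop.liminf
      (fun N : ℕ => (1 / (N : ℝ)) * ∑ n ∈ Finset.Icc 1 N, ξ n ω) :=
  finitely_dependent_bounded_liminf_general P ξ hmeas M hbdd K hindep c hc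
end

section
/- In the IITC setup, for every index i ∈ ι one has R_N − R*_N(i) ≥ (1/N)·log(ψ_1 i / ψ_{N+1} i) + (1/N)·Σ_{k=1}^{N} log(1 − c_k) + γ·r − γ, where R_N := (1/N) Σ_{k=1}^{N} [log(ψ_k ⋄ s_k) + log(1 − c_k)] is the exponential growth rate of the IITC portfolio with transaction costs and R*_N(i) := (1/N) Σ_{k=1}^{N} log(s_k i) is the exponential growth rate of the single currency pair i. -/
open Finset

/-- Universality bound for the IITC update rule: the exponential growth rate of the
IITC portfolio with transaction costs exceeds the growth rate of any single currency
pair `i` up to the boundary term `(1/N)·log(ψ₁ i/ψ_{N+1} i)`, the transaction-cost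
term `(1/N)·∑ log(1-c_k)`, and `γ·r - γ`. -/
theorem IITC_growth_rate_bound
    {ι : Type*} [Fintype ι] [Nonempty ι]
    (r γ : ℝ) (hr0 : 0 < r) (hr1 : r < 1) (hγ : 0 < γ)
    (N : ℕ) (hN : 1 ≤ N)
    (s s' : ℕ → ι → ℝ) (ψ ψ' : ℕ → ι → ℝ)
    (hs_lb : ∀ k ∈ Finset.Icc 1 N, ∀ i, r ≤ s k i)
    (hs_max : ∀ k ∈ Finset.Icc 1 N, (∀ i, s k i ≤ 1) ∧ ∃ i, s k i = 1)
    (d : ℕ → ℕ) (a : ℕ → ℕ → ℝ)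
    (hd : ∀ k ∈ Finset.Icc 1 N, 1 ≤ d k ∧ d k ≤ k)
    (ha_nonneg : ∀ k ∈ Finset.Icc 1 N, ∀ l ∈ Finset.Icc 1 (d k), 0 ≤ a k l)
    (ha_sum : ∀ k ∈ Finset.Icc 1 N, ∑ l ∈ Finset.Icc 1 (d k), a k l = 1)
    (hs' : ∀ k ∈ Finset.Icc 1 N, ∀ i,
      s' (k + 1) i = ∑ l ∈ Finset.Icc 1 (d k), a k l * s (k - l + 1) i)
    (hψ1_pos : ∀ i, 0 < ψ 1 i) (hψ1_sum : ∑ i, ψ 1 i = 1)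
    (hψ' : ∀ k ∈ Finset.Icc 1 N, ∀ i,
      ψ' k i = ψ k i * s k i / (∑ j, ψ k j * s k j))
    (hupdate : ∀ k ∈ Finset.Icc 1 N, ∀ i,
      ψ (k + 1) i = ψ' k i * Real.exp (γ * s' (k + 1) i) /
        (∑ j, ψ' k j * Real.exp (γ * s' (k + 1) j)))
    (c : ℕ → ℝ) (hc : ∀ k ∈ Finset.Icc 1 N, c k ∈ Set.Ico (0 : ℝ) 1)
    (i : ι) :
    (1 / (N : ℝ)) * Real.log (ψ 1 i / ψ (N + 1) i)
      + (1 / (N : ℝ)) * ∑ k ∈ Finset.Icc 1 N, Real.log (1 - c k)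
      + γ * r - γ
    ≤ (1 / (N : ℝ)) * ∑ k ∈ Finset.Icc 1 N,
        (Real.log (∑ j, ψ k j * s k j) + Real.log (1 - c k))
      - (1 / (N : ℝ)) * ∑ k ∈ Finset.Icc 1 N, Real.log (s k i) := by

  have hNpos : (0:ℝ) < N := by exact_mod_cast hN
  -- positivity of the portfolio weights for all relevant times
  have hpos : ∀ k : ℕ, 1 ≤ k → k ≤ N + 1 → ∀ j, 0 < ψ k j := by
    intro k
    induction k with
    | zero => intro h; exact absurd h (by norm_num)
    | succ n ih =>
      intro _ hk j
      rcases Nat.eq_zero_or_pos n with h0 | h1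
      · subst h0; exact hψ1_pos j
      · have hn : n ∈ Finset.Icc 1 N := Finset.mem_Icc.mpr ⟨h1, by omega⟩
        have hψn : ∀ j, 0 < ψ n j := ih h1 (by omega)
        have hD : 0 < ∑ j, ψ n j * s n j :=
          Finset.sum_pos (fun j _ => mul_pos (hψn j) (lt_of_lt_of_le hr0 (hs_lb n hn j)))
            Finset.univ_nonempty
        have hψ'pos : ∀ j, 0 < ψ' n j := by
          intro j
          rw [hψ' n hn j]
          exact div_pos (mul_pos (hψn j) (lt_of_lt_of_le hr0 (hs_lb n hn j))) hD
        have hZ : 0 < ∑ j, ψ' n j * Real.exp (γ * s' (n + 1) j) :=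
          Finset.sum_pos (fun j _ => mul_pos (hψ'pos j) (Real.exp_pos _)) Finset.univ_nonempty
        rw [hupdate n hn j]
        exact div_pos (mul_pos (hψ'pos j) (Real.exp_pos _)) hZ
  -- per-step inequality
  have key : ∀ k ∈ Finset.Icc 1 N,
      (Real.log (ψ k i) - Real.log (ψ (k + 1) i)) + (γ * r - γ)
        ≤ Real.log (∑ j, ψ k j * s k j) - Real.log (s k i) := by
    intro k hk
    obtain ⟨hk1, hkN⟩ := Finset.mem_Icc.mp hk
    have hψk : ∀ j, 0 < ψ k j := hpos k hk1 (by omega)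
    have hsk_pos : 0 < s k i := lt_of_lt_of_le hr0 (hs_lb k hk i)
    have hD : 0 < ∑ j, ψ k j * s k j :=
      Finset.sum_pos (fun j _ => mul_pos (hψk j) (lt_of_lt_of_le hr0 (hs_lb k hk j)))
        Finset.univ_nonempty
    have hψ'pos : ∀ j, 0 < ψ' k j := by
      intro j
      rw [hψ' k hk j]
      exact div_pos (mul_pos (hψk j) (lt_of_lt_of_le hr0 (hs_lb k hk j))) hD
    have hψ'sum : ∑ j, ψ' k j = 1 := by
      have h : ∑ j, ψ' k j = ∑ j, ψ k j * s k j / (∑ j, ψ k j * s k j) :=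
        Finset.sum_congr rfl (fun j _ => hψ' k hk j)
      rw [h, ← Finset.sum_div, div_self hD.ne']
    have hdk := hd k hk
    have hmem : ∀ l ∈ Finset.Icc 1 (d k), (k - l + 1) ∈ Finset.Icc 1 N := by
      intro l hl
      have hl' := Finset.mem_Icc.mp hl
      exact Finset.mem_Icc.mpr ⟨by omega, by omega⟩
    have hs'le : ∀ j, s' (k + 1) j ≤ 1 := by
      intro j
      rw [hs' k hk j]
      calc ∑ l ∈ Finset.Icc 1 (d k), a k l * s (k - l + 1) j
          ≤ ∑ l ∈ Finset.Icc 1 (d k), a k l * 1 :=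
            Finset.sum_le_sum (fun l hl =>
              mul_le_mul_of_nonneg_left ((hs_max _ (hmem l hl)).1 j) (ha_nonneg k hk l hl))
        _ = 1 := by simp [ha_sum k hk]
    have hs'ge : r ≤ s' (k + 1) i := by
      rw [hs' k hk i]
      calc r = ∑ l ∈ Finset.Icc 1 (d k), a k l * r := by
              rw [← Finset.sum_mul, ha_sum k hk, one_mul]
        _ ≤ ∑ l ∈ Finset.Icc 1 (d k), a k l * s (k - l + 1) i :=
            Finset.sum_le_sum (fun l hl =>
              mul_le_mul_of_nonneg_left (hs_lb _ (hmem l hl) i) (ha_nonneg k hk l hl))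
    have hZpos : 0 < ∑ j, ψ' k j * Real.exp (γ * s' (k + 1) j) :=
      Finset.sum_pos (fun j _ => mul_pos (hψ'pos j) (Real.exp_pos _)) Finset.univ_nonempty
    have hZle : (∑ j, ψ' k j * Real.exp (γ * s' (k + 1) j)) ≤ Real.exp γ := by
      calc (∑ j, ψ' k j * Real.exp (γ * s' (k + 1) j))
          ≤ ∑ j, ψ' k j * Real.exp γ :=
            Finset.sum_le_sum (fun j _ =>
              mul_le_mul_of_nonneg_left
                (Real.exp_le_exp.mpr (by nlinarith [hs'le j])) (hψ'pos j).le)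
        _ = Real.exp γ := by rw [← Finset.sum_mul, hψ'sum, one_mul]
    have hlogZ : Real.log (∑ j, ψ' k j * Real.exp (γ * s' (k + 1) j)) ≤ γ :=
      (Real.log_le_iff_le_exp hZpos).mpr hZle
    have e1 : 0 < ψ k i * s k i / (∑ j, ψ k j * s k j) :=
      div_pos (mul_pos (hψk i) hsk_pos) hD
    have hlog : Real.log (ψ (k + 1) i)
        = Real.log (ψ k i) + Real.log (s k i) + γ * s' (k + 1) i
          - Real.log (∑ j, ψ k j * s k j)
          - Real.log (∑ j, ψ' k j * Real.exp (γ * s' (k + 1) j)) := by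
      rw [hupdate k hk i, hψ' k hk i,
        Real.log_div (mul_pos e1 (Real.exp_pos _)).ne' hZpos.ne',
        Real.log_mul e1.ne' (Real.exp_pos _).ne',
        Real.log_div (mul_pos (hψk i) hsk_pos).ne' hD.ne',
        Real.log_mul (hψk i).ne' hsk_pos.ne', Real.log_exp]
      ring
    have hrs : γ * r ≤ γ * s' (k + 1) i := mul_le_mul_of_nonneg_left hs'ge hγ.le
    linarith [hlog, hlogZ, hrs]
  -- telescoping sum
  have htel : ∑ k ∈ Finset.Icc 1 N, (Real.log (ψ k i) - Real.log (ψ (k + 1) i))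
      = Real.log (ψ 1 i) - Real.log (ψ (N + 1) i) := by
    rw [← Finset.Ico_add_one_right_eq_Icc, Finset.sum_Ico_eq_sum_range]
    have h := Finset.sum_range_sub' (fun j => Real.log (ψ (1 + j) i)) N
    simpa [add_comm] using h
  have hsum : (Real.log (ψ 1 i) - Real.log (ψ (N + 1) i)) + (N : ℝ) * (γ * r - γ)
      ≤ (∑ k ∈ Finset.Icc 1 N, Real.log (∑ j, ψ k j * s k j))
        - ∑ k ∈ Finset.Icc 1 N, Real.log (s k i) := by
    have h1 := Finset.sum_le_sum key
    rw [Finset.sum_add_distrib, Finset.sum_const, htel, Nat.card_Icc, Nat.add_sub_cancel,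
      nsmul_eq_mul, Finset.sum_sub_distrib] at h1
    exact h1
  have hfin : (1 / (N : ℝ)) * (Real.log (ψ 1 i) - Real.log (ψ (N + 1) i)) + (γ * r - γ)
      ≤ (1 / (N : ℝ)) * ((∑ k ∈ Finset.Icc 1 N, Real.log (∑ j, ψ k j * s k j))
        - ∑ k ∈ Finset.Icc 1 N, Real.log (s k i)) := by
    have hmul := mul_le_mul_of_nonneg_left hsum (by positivity : (0:ℝ) ≤ 1 / N)
    have h2 : (1 / (N : ℝ)) * ((N : ℝ) * (γ * r - γ)) = γ * r - γ := by field_simp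
    rw [mul_add, h2] at hmul
    exact hmul
  rw [Real.log_div (hψ1_pos i).ne' (hpos (N + 1) (by omega) le_rfl i).ne',
    Finset.sum_add_distrib, mul_add]
  rw [mul_sub] at hfin
  linarith [hfin]
end

section
/- In the EIITC setup, for every index i ∈ ι one has R_N − R*_N(i) ≥ (1/N)·log(ψ_1 i / ψ_{N+1} i) + (1/N)·Σ_{k=1}^{N} log(1 − c_k) + γ·r − γ/r, where R_N := (1/N) Σ_{k=1}^{N} [log(ψ_k ⋄ s_k) + log(1 − c_k)] is the exponential growth rate of the EIITC portfolio with transaction costs and R*_N(i) := (1/N) Σ_{k=1}^{N} log(s_k i) is the exponential growth rate of the single currency pair i. -/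
/-!
Taking logarithms in the update rule gives, with `Z_k` the normaliser of the exponential step,

  `log ψ_{k+1} i = log ψ_k i + log s_k i - log (ψ_k ⋄ s_k)`
                    `+ γ s'_{k+1} i / (ψ'_k ⋄ s'_{k+1}) - log Z_k`.

All returns and predicted returns lie in `[r, 1]`, hence so do both dot products, the exponent
lies in `[γ r, γ / r]` and `log Z_k ≤ γ / r`. Summing over `k` telescopes the left-hand side;
the transaction-cost terms occur on both sides of the claim and cancel.
-/

open Finset Real

namespace EIITC

variable {ι : Type*} [Fintype ι]

structure IsPortfolio (ψ : ι → ℝ) : Prop where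
  pos : ∀ i, 0 < ψ i
  sum_eq_one : ∑ i, ψ i = 1

noncomputable def reweight (ψ v : ι → ℝ) : ι → ℝ := fun i => ψ i * v i / ∑ j, ψ j * v j

/-- In the paper's notation `ψ'_k = reweight ψ_k s_k` and `ψ_{k+1} = update γ ψ'_k s'_{k+1}`. -/
noncomputable def update (γ : ℝ) (ψ s' : ι → ℝ) : ι → ℝ :=
  reweight ψ fun j => exp (γ * s' j / ∑ l, ψ l * s' l)

namespace IsPortfolio

variable {ψ v : ι → ℝ}

theorem sum_mul_mem_Icc (hψ : IsPortfolio ψ) {a b : ℝ} (hv : ∀ j, v j ∈ Set.Icc a b) :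
    ∑ j, ψ j * v j ∈ Set.Icc a b :=
  (convex_Icc a b).sum_mem (fun j _ => (hψ.pos j).le) hψ.sum_eq_one fun j _ => hv j

theorem sum_mul_pos (hψ : IsPortfolio ψ) (hv : ∀ j, 0 < v j) : 0 < ∑ j, ψ j * v j :=
  sum_pos (fun j _ => mul_pos (hψ.pos j) (hv j))
    (nonempty_of_sum_ne_zero (hψ.sum_eq_one.symm ▸ one_ne_zero))

theorem reweight (hψ : IsPortfolio ψ) (hv : ∀ j, 0 < v j) : IsPortfolio (reweight ψ v) where
  pos i := div_pos (mul_pos (hψ.pos i) (hv i)) (hψ.sum_mul_pos hv)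
  sum_eq_one := by unfold EIITC.reweight; rw [← sum_div, div_self (hψ.sum_mul_pos hv).ne']

theorem update (hψ : IsPortfolio ψ) (γ : ℝ) (s' : ι → ℝ) :
    IsPortfolio (update γ ψ s') :=
  hψ.reweight fun _ => exp_pos _

theorem log_reweight (hψ : IsPortfolio ψ) (hv : ∀ j, 0 < v j) (i : ι) :
    log (EIITC.reweight ψ v i) = log (ψ i) + log (v i) - log (∑ j, ψ j * v j) := by
  rw [EIITC.reweight, log_div (mul_pos (hψ.pos i) (hv i)).ne' (hψ.sum_mul_pos hv).ne',
    log_mul (hψ.pos i).ne' (hv i).ne']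

theorem log_sum_mul_exp_le (hψ : IsPortfolio ψ) {M : ℝ} (hv : ∀ j, v j ≤ M) :
    log (∑ j, ψ j * exp (v j)) ≤ M := by
  rw [log_le_iff_le_exp (hψ.sum_mul_pos fun _ => exp_pos _)]
  calc ∑ j, ψ j * exp (v j) ≤ ∑ j, ψ j * exp M :=
        sum_le_sum fun j _ => mul_le_mul_of_nonneg_left (exp_le_exp.2 (hv j)) (hψ.pos j).le
    _ = exp M := by rw [← sum_mul, hψ.sum_eq_one, one_mul]

end IsPortfolio

theorem div_mem_Icc_inv {r x y : ℝ} (hr : 0 < r) (hx : x ∈ Set.Icc r 1) (hy : y ∈ Set.Icc r 1) :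
    x / y ∈ Set.Icc r r⁻¹ := by
  have hy0 : 0 < y := hr.trans_le hy.1
  constructor
  · rw [le_div_iff₀ hy0]; nlinarith [hx.1, hy.2]
  · rw [div_le_iff₀ hy0, ← div_eq_inv_mul, le_div_iff₀ hr]; nlinarith [hx.2, hy.1]

theorem log_sub_log_update_le {r γ : ℝ} (hr : 0 < r) (hγ : 0 ≤ γ) {ψ s s' : ι → ℝ}
    (hψ : IsPortfolio ψ) (hs : ∀ j, s j ∈ Set.Icc r 1) (hs' : ∀ j, s' j ∈ Set.Icc r 1) (i : ι) :
    log (ψ i) - log (update γ (reweight ψ s) s' i) + (γ * r - γ / r) ≤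
      log (∑ j, ψ j * s j) - log (s i) := by
  have hs_pos : ∀ j, 0 < s j := fun j => hr.trans_le (hs j).1
  have hψ' := hψ.reweight hs_pos
  set D := ∑ j, reweight ψ s j * s' j
  have hexponent : ∀ j, γ * s' j / D ∈ Set.Icc (γ * r) (γ / r) := fun j => by
    have h := div_mem_Icc_inv hr (hs' j) (hψ'.sum_mul_mem_Icc hs')
    rw [mul_div_assoc, div_eq_mul_inv γ r]
    exact ⟨mul_le_mul_of_nonneg_left h.1 hγ, mul_le_mul_of_nonneg_left h.2 hγ⟩
  have hlogZ := hψ'.log_sum_mul_exp_le (v := fun j => γ * s' j / D) fun j => (hexponent j).2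
  rw [update, hψ'.log_reweight (fun _ => exp_pos _), log_exp,
    hψ.log_reweight hs_pos]
  linarith [(hexponent i).1]

section Horizon

variable {ψ s s' : ℕ → ι → ℝ} {γ : ℝ} {N : ℕ}

theorem isPortfolio_of_update (h1 : IsPortfolio (ψ 1)) (hs : ∀ k ∈ Icc 1 N, ∀ j, 0 < s k j)
    (hnext : ∀ k ∈ Icc 1 N, ψ (k + 1) = update γ (reweight (ψ k) (s k)) (s' (k + 1))) :
    ∀ k ∈ Icc 1 (N + 1), IsPortfolio (ψ k) := by
  intro k hk
  obtain ⟨hk1, hkN⟩ := mem_Icc.1 hk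
  induction k, hk1 using Nat.le_induction with
  | base => exact h1
  | succ k hk1 ih =>
    have hk : k ∈ Icc 1 N := mem_Icc.2 ⟨hk1, by omega⟩
    rw [hnext k hk]
    exact ((ih (mem_Icc.2 ⟨hk1, by omega⟩) (by omega)).reweight (hs k hk)).update _ _

theorem log_sub_log_add_le_sum {r : ℝ} (hr : 0 < r) (hγ : 0 ≤ γ) (hN : 1 ≤ N)
    (h1 : IsPortfolio (ψ 1)) (hs : ∀ k ∈ Icc 1 N, ∀ j, s k j ∈ Set.Icc r 1)
    (hs' : ∀ k ∈ Icc 1 N, ∀ j, s' (k + 1) j ∈ Set.Icc r 1)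
    (hnext : ∀ k ∈ Icc 1 N, ψ (k + 1) = update γ (reweight (ψ k) (s k)) (s' (k + 1))) (i : ι) :
    log (ψ 1 i) - log (ψ (N + 1) i) + N * (γ * r - γ / r) ≤
      ∑ k ∈ Icc 1 N, log (∑ j, ψ k j * s k j) - ∑ k ∈ Icc 1 N, log (s k i) := by
  have hport := isPortfolio_of_update h1 (fun k hk j => hr.trans_le (hs k hk j).1) hnext
  have hstep : ∀ k ∈ Icc 1 N, log (ψ k i) - log (ψ (k + 1) i) + (γ * r - γ / r) ≤
      log (∑ j, ψ k j * s k j) - log (s k i) := fun k hk => by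
    rw [hnext k hk]
    exact log_sub_log_update_le hr hγ (hport k (Icc_subset_Icc_right N.le_succ hk)) (hs k hk)
      (hs' k hk) i
  have htelescope : ∑ k ∈ Icc 1 N, (log (ψ k i) - log (ψ (k + 1) i)) =
      log (ψ 1 i) - log (ψ (N + 1) i) := by
    simpa only [neg_sub_neg] using sum_Icc_sub hN fun k => -log (ψ k i)
  have htotal := sum_le_sum hstep
  rwa [sum_add_distrib, htelescope, sum_const, Nat.card_Icc, Nat.add_sub_cancel, nsmul_eq_mul,
    sum_sub_distrib] at htotal

end Horizon

end EIITC

open EIITC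

theorem EIITC_growth_rate_bound_general
    {ι : Type*} [Fintype ι]
    (r γ : ℝ) (hr0 : 0 < r) (hγ : 0 < γ)
    (N : ℕ) (hN : 1 ≤ N)
    (s s' : ℕ → ι → ℝ) (ψ ψ' : ℕ → ι → ℝ)
    (hs_lb : ∀ k ∈ Finset.Icc 1 N, ∀ i, r ≤ s k i)
    (hs_max : ∀ k ∈ Finset.Icc 1 N, (∀ i, s k i ≤ 1) ∧ ∃ i, s k i = 1)
    (d : ℕ → ℕ) (a : ℕ → ℕ → ℝ)
    (hd : ∀ k ∈ Finset.Icc 1 N, 1 ≤ d k ∧ d k ≤ k)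
    (ha_nonneg : ∀ k ∈ Finset.Icc 1 N, ∀ l ∈ Finset.Icc 1 (d k), 0 ≤ a k l)
    (ha_sum : ∀ k ∈ Finset.Icc 1 N, ∑ l ∈ Finset.Icc 1 (d k), a k l = 1)
    (hs' : ∀ k ∈ Finset.Icc 1 N, ∀ i,
      s' (k + 1) i = ∑ l ∈ Finset.Icc 1 (d k), a k l * s (k - l + 1) i)
    (hψ1_pos : ∀ i, 0 < ψ 1 i) (hψ1_sum : ∑ i, ψ 1 i = 1)
    (hψ' : ∀ k ∈ Finset.Icc 1 N, ∀ i,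
      ψ' k i = ψ k i * s k i / (∑ j, ψ k j * s k j))
    (hupdate : ∀ k ∈ Finset.Icc 1 N, ∀ i,
      ψ (k + 1) i = ψ' k i * Real.exp (γ * s' (k + 1) i / (∑ j, ψ' k j * s' (k + 1) j)) /
        (∑ j, ψ' k j * Real.exp (γ * s' (k + 1) j / (∑ j', ψ' k j' * s' (k + 1) j'))))
    (c : ℕ → ℝ)
    (i : ι) :
    (1 / (N : ℝ)) * Real.log (ψ 1 i / ψ (N + 1) i)
      + (1 / (N : ℝ)) * ∑ k ∈ Finset.Icc 1 N, Real.log (1 - c k)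
      + γ * r - γ / r
    ≤ (1 / (N : ℝ)) * ∑ k ∈ Finset.Icc 1 N,
        (Real.log (∑ j, ψ k j * s k j) + Real.log (1 - c k))
      - (1 / (N : ℝ)) * ∑ k ∈ Finset.Icc 1 N, Real.log (s k i) := by
  have hs_mem : ∀ k ∈ Icc 1 N, ∀ j, s k j ∈ Set.Icc r 1 :=
    fun k hk j => ⟨hs_lb k hk j, (hs_max k hk).1 j⟩
  have hs'_mem : ∀ k ∈ Icc 1 N, ∀ j, s' (k + 1) j ∈ Set.Icc r 1 := by
    intro k hk j
    rw [hs' k hk j]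
    refine (convex_Icc r 1).sum_mem (ha_nonneg k hk) (ha_sum k hk) fun l hl => hs_mem _ ?_ j
    have := (hd k hk).2
    simp only [mem_Icc] at hk hl ⊢
    omega
  have hnext : ∀ k ∈ Icc 1 N, ψ (k + 1) = update γ (reweight (ψ k) (s k)) (s' (k + 1)) := by
    intro k hk
    have : ψ' k = reweight (ψ k) (s k) := funext (hψ' k hk)
    exact funext fun j => this ▸ hupdate k hk j
  have h1 : IsPortfolio (ψ 1) := ⟨hψ1_pos, hψ1_sum⟩
  have hlast := isPortfolio_of_update h1 (fun k hk j => hr0.trans_le (hs_mem k hk j).1) hnext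
    (N + 1) (right_mem_Icc.2 (by omega))
  have htotal := log_sub_log_add_le_sum hr0 hγ.le hN h1 hs_mem hs'_mem hnext i
  have hN0 : (0 : ℝ) < N := by exact_mod_cast hN
  have hmean := mul_le_mul_of_nonneg_left htotal (one_div_nonneg.2 hN0.le)
  rw [mul_add, ← mul_assoc, one_div_mul_cancel hN0.ne', one_mul] at hmean
  rw [log_div (hψ1_pos i).ne' (hlast.pos i).ne', sum_add_distrib]
  linarith

/-- Universality bound for the EIITC update rule: the exponential growth rate of the
EIITC portfolio with transaction costs exceeds the growth rate of any single currency
pair `i` up to the boundary term `(1/N)·log(ψ₁ i/ψ_{N+1} i)`, the transaction-cost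
term `(1/N)·∑ log(1-c_k)`, and `γ·r - γ/r`. -/
theorem EIITC_growth_rate_bound
    {ι : Type*} [Fintype ι] [Nonempty ι]
    (r γ : ℝ) (hr0 : 0 < r) (hr1 : r < 1) (hγ : 0 < γ)
    (N : ℕ) (hN : 1 ≤ N)
    (s s' : ℕ → ι → ℝ) (ψ ψ' : ℕ → ι → ℝ)
    (hs_lb : ∀ k ∈ Finset.Icc 1 N, ∀ i, r ≤ s k i)
    (hs_max : ∀ k ∈ Finset.Icc 1 N, (∀ i, s k i ≤ 1) ∧ ∃ i, s k i = 1)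
    (d : ℕ → ℕ) (a : ℕ → ℕ → ℝ)
    (hd : ∀ k ∈ Finset.Icc 1 N, 1 ≤ d k ∧ d k ≤ k)
    (ha_nonneg : ∀ k ∈ Finset.Icc 1 N, ∀ l ∈ Finset.Icc 1 (d k), 0 ≤ a k l)
    (ha_sum : ∀ k ∈ Finset.Icc 1 N, ∑ l ∈ Finset.Icc 1 (d k), a k l = 1)
    (hs' : ∀ k ∈ Finset.Icc 1 N, ∀ i,
      s' (k + 1) i = ∑ l ∈ Finset.Icc 1 (d k), a k l * s (k - l + 1) i)
    (hψ1_pos : ∀ i, 0 < ψ 1 i) (hψ1_sum : ∑ i, ψ 1 i = 1)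
    (hψ' : ∀ k ∈ Finset.Icc 1 N, ∀ i,
      ψ' k i = ψ k i * s k i / (∑ j, ψ k j * s k j))
    (hupdate : ∀ k ∈ Finset.Icc 1 N, ∀ i,
      ψ (k + 1) i = ψ' k i * Real.exp (γ * s' (k + 1) i / (∑ j, ψ' k j * s' (k + 1) j)) /
        (∑ j, ψ' k j * Real.exp (γ * s' (k + 1) j / (∑ j', ψ' k j' * s' (k + 1) j'))))
    (c : ℕ → ℝ) (hc : ∀ k ∈ Finset.Icc 1 N, c k ∈ Set.Ico (0 : ℝ) 1)
    (i : ι) :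
    (1 / (N : ℝ)) * Real.log (ψ 1 i / ψ (N + 1) i)
      + (1 / (N : ℝ)) * ∑ k ∈ Finset.Icc 1 N, Real.log (1 - c k)
      + γ * r - γ / r
    ≤ (1 / (N : ℝ)) * ∑ k ∈ Finset.Icc 1 N,
        (Real.log (∑ j, ψ k j * s k j) + Real.log (1 - c k))
      - (1 / (N : ℝ)) * ∑ k ∈ Finset.Icc 1 N, Real.log (s k i) :=
  EIITC_growth_rate_bound_general r γ hr0 hγ N hN s s' ψ ψ' hs_lb hs_max d a hd ha_nonneg ha_sum hs'
    hψ1_pos hψ1_sum hψ' hupdate c i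
end

section
/- Let ι be a nonempty finite index set, let q : ι → ℝ satisfy q i ≥ 0 for all i and Σ_{i∈ι} q i = 1, and let b : ι → ℝ satisfy α ≤ b i ≤ β for all i, where α ≤ β are real numbers. Define p : ι → ℝ by p i := q i · exp(b i) / Σ_{j∈ι} q j · exp(b j). Then Σ_{i∈ι} |p i − q i| ≤ e^{β−α} − 1. -/
open Finset

/-! The normalizer `S = ∑ j, q j * exp (b j)` is a convex combination of the values `exp (b j)`,
so `S` and every `exp (b i)` lie in `[e^α, e^β]`. Hence
`|p i - q i| = q i * |exp (b i) - S| / S ≤ q i * (e^β - e^α) / e^α`, and summing over `i` gives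
`e^{β-α} - 1`. -/

theorem sum_abs_mul_div_sub_le {ι : Type*} (s : Finset ι) (q x : ι → ℝ)
    (hq : ∀ i ∈ s, 0 ≤ q i) (hqsum : ∑ i ∈ s, q i = 1) {S d : ℝ} (hS : 0 < S)
    (hx : ∀ i ∈ s, |x i - S| ≤ d) :
    ∑ i ∈ s, |q i * x i / S - q i| ≤ d / S := by
  have hterm : ∀ i ∈ s, |q i * x i / S - q i| ≤ q i * d / S := fun i hi => by
    have hrw : q i * x i / S - q i = q i * (x i - S) / S := by field_simp
    rw [hrw, abs_div, abs_mul, abs_of_nonneg (hq i hi), abs_of_pos hS]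
    gcongr
    exacts [hq i hi, hx i hi]
  calc ∑ i ∈ s, |q i * x i / S - q i| ≤ ∑ i ∈ s, q i * d / S := sum_le_sum hterm
    _ = d / S := by rw [← sum_div, ← sum_mul, hqsum, one_mul]

theorem exp_reweight_l1_dist_le_general
    {ι : Type*} [Fintype ι]
    (q b : ι → ℝ) (hq : ∀ i, 0 ≤ q i) (hqsum : ∑ i, q i = 1)
    (α β : ℝ) (hb : ∀ i, b i ∈ Set.Icc α β) :
    ∑ i, |q i * Real.exp (b i) / (∑ j, q j * Real.exp (b j)) - q i|
      ≤ Real.exp (β - α) - 1 := by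
  set S := ∑ j, q j * Real.exp (b j)
  have hexp_mem : ∀ i, Real.exp (b i) ∈ Set.Icc (Real.exp α) (Real.exp β) := fun i =>
    ⟨Real.exp_le_exp.2 (hb i).1, Real.exp_le_exp.2 (hb i).2⟩
  have hS : S ∈ Set.Icc (Real.exp α) (Real.exp β) :=
    (convex_Icc _ _).sum_mem (fun i _ => hq i) hqsum fun i _ => hexp_mem i
  have hSpos : 0 < S := (Real.exp_pos α).trans_le hS.1
  calc ∑ i, |q i * Real.exp (b i) / S - q i| ≤ (Real.exp β - Real.exp α) / S :=
        sum_abs_mul_div_sub_le _ q _ (fun i _ => hq i) hqsum hSpos fun i _ =>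
          Real.dist_le_of_mem_Icc (hexp_mem i) hS
    _ ≤ (Real.exp β - Real.exp α) / Real.exp α := by
        gcongr
        · linarith [hS.1, hS.2]
        · exact hS.1
    _ = Real.exp (β - α) - 1 := by
        rw [sub_div, ← Real.exp_sub, div_self (Real.exp_ne_zero α)]

/-- Key ℓ¹-estimate for exponential reweighting: if `q` is a probability vector and
`α ≤ b i ≤ β` for all `i`, then the exponentially reweighted vector
`p i = q i·exp(b i) / ∑_j q j·exp(b j)` satisfies `∑_i |p i - q i| ≤ e^{β-α} - 1`. -/
theorem exp_reweight_l1_dist_le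
    {ι : Type*} [Fintype ι] [Nonempty ι]
    (q b : ι → ℝ) (hq : ∀ i, 0 ≤ q i) (hqsum : ∑ i, q i = 1)
    (α β : ℝ) (hαβ : α ≤ β) (hb : ∀ i, b i ∈ Set.Icc α β) :
    ∑ i, |q i * Real.exp (b i) / (∑ j, q j * Real.exp (b j)) - q i|
      ≤ Real.exp (β - α) - 1 :=
  exp_reweight_l1_dist_le_general q b hq hqsum α β hb
end

section
/- In the IITC setup, for every 1 ≤ k ≤ N one has d(ψ_{k+1}, ψ'_k) := Σ_{i∈ι} |ψ_{k+1} i − ψ'_k i| ≤ e^{γ(1−r)} − 1 = e^{γ(1−r)}·(1 − e^{−γ(1−r)}). Consequently, if c ∈ (0,1) and the transaction-cost ratio satisfies c_{k+1} ≤ (c/(1−c))·d(ψ_{k+1}, ψ'_k), then c_{k+1} ≤ (c/(1−c))·e^{γ(1−r)}·(1 − e^{−γ(1−r)}). -/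
open Finset

/-- Transaction-cost bound for the IITC update rule: on every trading day the
ℓ¹-distance between the updated portfolio `ψ_{k+1}` and the automatically reached
proportion `ψ'_k` is at most `e^{γ(1-r)} - 1 = e^{γ(1-r)}·(1 - e^{-γ(1-r)})`; hence if
the transaction-cost ratio satisfies `c_{k+1} ≤ (c/(1-c))·d(ψ_{k+1}, ψ'_k)` for some
`c ∈ (0,1)`, then `c_{k+1} ≤ (c/(1-c))·e^{γ(1-r)}·(1 - e^{-γ(1-r)})`. -/
theorem IITC_transaction_cost_bound
    {ι : Type*} [Fintype ι] [Nonempty ι]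
    (r γ : ℝ) (hr0 : 0 < r) (hr1 : r < 1) (hγ : 0 < γ)
    (N : ℕ) (hN : 1 ≤ N)
    (s s' : ℕ → ι → ℝ) (ψ ψ' : ℕ → ι → ℝ)
    (hs_lb : ∀ k ∈ Finset.Icc 1 N, ∀ i, r ≤ s k i)
    (hs_max : ∀ k ∈ Finset.Icc 1 N, (∀ i, s k i ≤ 1) ∧ ∃ i, s k i = 1)
    (d : ℕ → ℕ) (a : ℕ → ℕ → ℝ)
    (hd : ∀ k ∈ Finset.Icc 1 N, 1 ≤ d k ∧ d k ≤ k)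
    (ha_nonneg : ∀ k ∈ Finset.Icc 1 N, ∀ l ∈ Finset.Icc 1 (d k), 0 ≤ a k l)
    (ha_sum : ∀ k ∈ Finset.Icc 1 N, ∑ l ∈ Finset.Icc 1 (d k), a k l = 1)
    (hs' : ∀ k ∈ Finset.Icc 1 N, ∀ i,
      s' (k + 1) i = ∑ l ∈ Finset.Icc 1 (d k), a k l * s (k - l + 1) i)
    (hψ1_pos : ∀ i, 0 < ψ 1 i) (hψ1_sum : ∑ i, ψ 1 i = 1)
    (hψ' : ∀ k ∈ Finset.Icc 1 N, ∀ i,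
      ψ' k i = ψ k i * s k i / (∑ j, ψ k j * s k j))
    (hupdate : ∀ k ∈ Finset.Icc 1 N, ∀ i,
      ψ (k + 1) i = ψ' k i * Real.exp (γ * s' (k + 1) i) /
        (∑ j, ψ' k j * Real.exp (γ * s' (k + 1) j))) :
    ∀ k ∈ Finset.Icc 1 N,
      (∑ i, |ψ (k + 1) i - ψ' k i| ≤ Real.exp (γ * (1 - r)) - 1) ∧
      (Real.exp (γ * (1 - r)) - 1
        = Real.exp (γ * (1 - r)) * (1 - Real.exp (-(γ * (1 - r))))) ∧
      ∀ c : ℝ, c ∈ Set.Ioo (0 : ℝ) 1 → ∀ ck : ℝ,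
        ck ≤ (c / (1 - c)) * ∑ i, |ψ (k + 1) i - ψ' k i| →
        ck ≤ (c / (1 - c)) * (Real.exp (γ * (1 - r)) * (1 - Real.exp (-(γ * (1 - r))))) := by

  have hγr : 0 < γ * (1 - r) := by nlinarith
  have hψpos : ∀ k, 1 ≤ k → k ≤ N → ∀ i, 0 < ψ k i := by
    intro k
    induction k with
    | zero => intro h; omega
    | succ n ih =>
      intro _ hkN i
      rcases Nat.eq_zero_or_pos n with hn | hn
      · subst hn; exact hψ1_pos i
      · have hn' : n ∈ Finset.Icc 1 N := by simp only [Finset.mem_Icc]; omega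
        have hψn := ih hn (by omega)
        have hspos : ∀ j, 0 < s n j := fun j => lt_of_lt_of_le hr0 (hs_lb n hn' j)
        have hden : 0 < ∑ j, ψ n j * s n j :=
          Finset.sum_pos (fun j _ => mul_pos (hψn j) (hspos j)) Finset.univ_nonempty
        have hψ'pos : ∀ j, 0 < ψ' n j := by
          intro j
          rw [hψ' n hn' j]
          exact div_pos (mul_pos (hψn j) (hspos j)) hden
        have hden2 : 0 < ∑ j, ψ' n j * Real.exp (γ * s' (n+1) j) :=
          Finset.sum_pos (fun j _ => mul_pos (hψ'pos j) (Real.exp_pos _)) Finset.univ_nonempty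
        rw [hupdate n hn' i]
        exact div_pos (mul_pos (hψ'pos i) (Real.exp_pos _)) hden2
  intro k hkmem
  have hk := Finset.mem_Icc.mp hkmem
  have hψk := hψpos k hk.1 hk.2
  have hspos : ∀ j, 0 < s k j := fun j => lt_of_lt_of_le hr0 (hs_lb k hkmem j)
  have hden : 0 < ∑ j, ψ k j * s k j :=
    Finset.sum_pos (fun j _ => mul_pos (hψk j) (hspos j)) Finset.univ_nonempty
  have hψ'pos : ∀ j, 0 < ψ' k j := fun j => by
    rw [hψ' k hkmem j]; exact div_pos (mul_pos (hψk j) (hspos j)) hden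
  have hψ'sum : ∑ j, ψ' k j = 1 := by
    rw [Finset.sum_congr rfl (fun j _ => hψ' k hkmem j), ← Finset.sum_div,
      div_self hden.ne']
  have hdk := hd k hkmem
  have hs'lb : ∀ i, r ≤ s' (k+1) i := by
    intro i
    rw [hs' k hkmem i]
    calc r = ∑ l ∈ Finset.Icc 1 (d k), a k l * r := by
            rw [← Finset.sum_mul, ha_sum k hkmem, one_mul]
      _ ≤ _ := by
            apply Finset.sum_le_sum
            intro l hl
            have hl' := Finset.mem_Icc.mp hl
            have hmem : k - l + 1 ∈ Finset.Icc 1 N := by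
              simp only [Finset.mem_Icc]; omega
            exact mul_le_mul_of_nonneg_left (hs_lb _ hmem i) (ha_nonneg k hkmem l hl)
  have hs'ub : ∀ i, s' (k+1) i ≤ 1 := by
    intro i
    rw [hs' k hkmem i]
    calc ∑ l ∈ Finset.Icc 1 (d k), a k l * s (k - l + 1) i
        ≤ ∑ l ∈ Finset.Icc 1 (d k), a k l * 1 := by
          apply Finset.sum_le_sum
          intro l hl
          have hl' := Finset.mem_Icc.mp hl
          have hmem : k - l + 1 ∈ Finset.Icc 1 N := by
            simp only [Finset.mem_Icc]; omega
          exact mul_le_mul_of_nonneg_left ((hs_max _ hmem).1 i) (ha_nonneg k hkmem l hl)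
      _ = 1 := by simp [ha_sum k hkmem]
  set D := ∑ j, ψ' k j * Real.exp (γ * s' (k+1) j) with hD
  have hDlb : Real.exp (γ * r) ≤ D := by
    calc Real.exp (γ * r) = ∑ j, ψ' k j * Real.exp (γ * r) := by
          rw [← Finset.sum_mul, hψ'sum, one_mul]
      _ ≤ D := Finset.sum_le_sum fun j _ =>
          mul_le_mul_of_nonneg_left
            (Real.exp_le_exp.mpr (by nlinarith [hs'lb j])) (hψ'pos j).le
  have hDub : D ≤ Real.exp γ := by
    calc D ≤ ∑ j, ψ' k j * Real.exp γ := Finset.sum_le_sum fun j _ =>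
          mul_le_mul_of_nonneg_left
            (Real.exp_le_exp.mpr (by nlinarith [hs'ub j])) (hψ'pos j).le
      _ = Real.exp γ := by rw [← Finset.sum_mul, hψ'sum, one_mul]
  have hDpos : 0 < D := lt_of_lt_of_le (Real.exp_pos _) hDlb
  have hE : Real.exp (γ * (1 - r)) = Real.exp γ / Real.exp (γ * r) := by
    rw [← Real.exp_sub]; ring_nf
  have hE' : Real.exp (-(γ * (1 - r))) = Real.exp (γ * r) / Real.exp γ := by
    rw [← Real.exp_sub]; ring_nf
  have habs : ∀ i, |ψ (k+1) i - ψ' k i| ≤ ψ' k i * (Real.exp (γ * (1 - r)) - 1) := by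
    intro i
    rw [hupdate k hkmem i]
    have hub : ψ' k i * Real.exp (γ * s' (k+1) i) / D ≤ ψ' k i * Real.exp (γ * (1 - r)) := by
      rw [hE, div_le_iff₀ hDpos]
      have h1 : Real.exp (γ * s' (k+1) i) ≤ Real.exp γ :=
        Real.exp_le_exp.mpr (by nlinarith [hs'ub i])
      have h2 : Real.exp (γ * r) ≤ D := hDlb
      have h3 : 0 < Real.exp (γ * r) := Real.exp_pos _
      calc ψ' k i * Real.exp (γ * s' (k+1) i)
          ≤ ψ' k i * Real.exp γ := mul_le_mul_of_nonneg_left h1 (hψ'pos i).le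
        _ = ψ' k i * (Real.exp γ / Real.exp (γ*r)) * Real.exp (γ*r) := by field_simp
        _ ≤ ψ' k i * (Real.exp γ / Real.exp (γ*r)) * D :=
            mul_le_mul_of_nonneg_left h2 (mul_nonneg (hψ'pos i).le (by positivity))
    have hlb : ψ' k i * Real.exp (-(γ * (1 - r))) ≤ ψ' k i * Real.exp (γ * s' (k+1) i) / D := by
      rw [hE', le_div_iff₀ hDpos]
      have h1 : Real.exp (γ * r) ≤ Real.exp (γ * s' (k+1) i) :=
        Real.exp_le_exp.mpr (by nlinarith [hs'lb i])
      have h3 : 0 < Real.exp γ := Real.exp_pos _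
      calc ψ' k i * (Real.exp (γ*r) / Real.exp γ) * D
          ≤ ψ' k i * (Real.exp (γ*r) / Real.exp γ) * Real.exp γ :=
            mul_le_mul_of_nonneg_left hDub (mul_nonneg (hψ'pos i).le (by positivity))
        _ = ψ' k i * Real.exp (γ*r) := by field_simp
        _ ≤ ψ' k i * Real.exp (γ * s' (k+1) i) := mul_le_mul_of_nonneg_left h1 (hψ'pos i).le
    have hexpineq : 1 - Real.exp (-(γ * (1 - r))) ≤ Real.exp (γ * (1 - r)) - 1 := by
      nlinarith [Real.add_one_le_exp (γ * (1 - r)), Real.add_one_le_exp (-(γ * (1 - r)))]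
    rw [abs_le]
    constructor
    · nlinarith [(hψ'pos i).le]
    · nlinarith [(hψ'pos i).le]
  have hsum : ∑ i, |ψ (k+1) i - ψ' k i| ≤ Real.exp (γ * (1 - r)) - 1 := by
    calc ∑ i, |ψ (k+1) i - ψ' k i|
        ≤ ∑ i, ψ' k i * (Real.exp (γ * (1 - r)) - 1) :=
          Finset.sum_le_sum fun i _ => habs i
      _ = Real.exp (γ * (1 - r)) - 1 := by rw [← Finset.sum_mul, hψ'sum, one_mul]
  have heq : Real.exp (γ * (1 - r)) - 1
      = Real.exp (γ * (1 - r)) * (1 - Real.exp (-(γ * (1 - r)))) := by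
    have := Real.exp_neg (γ * (1 - r))
    have h2 : Real.exp (γ * (1 - r)) * Real.exp (-(γ * (1 - r))) = 1 := by
      rw [← Real.exp_add]; simp
    nlinarith
  refine ⟨hsum, heq, ?_⟩
  intro c hc ck hck
  have hq : 0 ≤ c / (1 - c) := div_nonneg hc.1.le (by linarith [hc.2])
  calc ck ≤ (c / (1 - c)) * ∑ i, |ψ (k+1) i - ψ' k i| := hck
    _ ≤ (c / (1 - c)) * (Real.exp (γ * (1 - r)) - 1) :=
        mul_le_mul_of_nonneg_left hsum hq
    _ = (c / (1 - c)) * (Real.exp (γ * (1 - r)) * (1 - Real.exp (-(γ * (1 - r))))) := by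
        rw [heq]
end

section
/- In the EIITC setup, for every 1 ≤ k ≤ N one has d(ψ_{k+1}, ψ'_k) := Σ_{i∈ι} |ψ_{k+1} i − ψ'_k i| ≤ e^{γ(1/r − r)} − 1. Consequently, if c ∈ (0,1) and the transaction-cost ratio satisfies c_{k+1} ≤ (c/(1−c))·d(ψ_{k+1}, ψ'_k), then c_{k+1} ≤ (c/(1−c))·(e^{γ(1/r − r)} − 1). -/
/-!
Each EIITC step multiplies the weight of `ψ'_k` at `i` by `exp (x i) / Z`, where the exponents
`x i = γ s'_{k+1} i / (ψ'_k ⋄ s'_{k+1})` lie in `[γ r, γ / r]` because `s'_{k+1}` and its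
`ψ'_k`-average both lie in `[r, 1]`. The normaliser `Z` is itself a `ψ'_k`-average of the
`exp (x i)`, so every factor lies in `[e^{-t}, e^t]` with `t = γ (1/r - r)` and differs from `1`
by at most `e^t - 1`; averaging against the probability vector `ψ'_k` gives the bound.
-/

open Finset Real

section WeightedAverage

variable {α R : Type*} [Semiring R] [PartialOrder R] [IsOrderedRing R]
  {t : Finset α} {w f : α → R} {a : R}

theorem Finset.le_sum_mul_of_sum_eq_one (hw : ∀ i ∈ t, 0 ≤ w i) (h1 : ∑ i ∈ t, w i = 1)
    (ha : ∀ i ∈ t, a ≤ f i) : a ≤ ∑ i ∈ t, w i * f i :=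
  calc a = ∑ i ∈ t, w i * a := by rw [← sum_mul, h1, one_mul]
    _ ≤ ∑ i ∈ t, w i * f i := sum_le_sum fun i hi => mul_le_mul_of_nonneg_left (ha i hi) (hw i hi)

theorem Finset.sum_mul_le_of_sum_eq_one (hw : ∀ i ∈ t, 0 ≤ w i) (h1 : ∑ i ∈ t, w i = 1)
    (ha : ∀ i ∈ t, f i ≤ a) : ∑ i ∈ t, w i * f i ≤ a :=
  calc ∑ i ∈ t, w i * f i ≤ ∑ i ∈ t, w i * a :=
        sum_le_sum fun i hi => mul_le_mul_of_nonneg_left (ha i hi) (hw i hi)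
    _ = a := by rw [← sum_mul, h1, one_mul]

end WeightedAverage

theorem abs_sub_one_le_of_inv_le_of_le {ρ q : ℝ} (hq : 0 < q) (hlo : q⁻¹ ≤ ρ) (hhi : ρ ≤ q) :
    |ρ - 1| ≤ q - 1 := by
  have : 2 - q ≤ q⁻¹ := by
    rw [← one_div, le_div_iff₀ hq]
    nlinarith [sq_nonneg (q - 1)]
  rw [abs_le]
  constructor <;> linarith

section Reweight

variable {ι : Type*} [Fintype ι]

noncomputable def reweight (w f : ι → ℝ) : ι → ℝ :=
  fun i => w i * f i / ∑ j, w j * f j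

/-- `expUpdate γ ψ'_k s'_{k+1}` is the EIITC portfolio `ψ_{k+1}`, just as `reweight ψ_k s_k`
is `ψ'_k`. -/
noncomputable def expUpdate (γ : ℝ) (w e : ι → ℝ) : ι → ℝ :=
  reweight w fun i => exp (γ * e i / ∑ j, w j * e j)

variable {w f : ι → ℝ}

theorem sum_mul_pos_of_mem_stdSimplex (hw : w ∈ stdSimplex ℝ ι) (hf : ∀ i, 0 < f i) :
    0 < ∑ i, w i * f i := by
  obtain ⟨i, -, hi⟩ := exists_ne_zero_of_sum_ne_zero (hw.2.symm ▸ one_ne_zero)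
  exact sum_pos' (fun j _ => mul_nonneg (hw.1 j) (hf j).le)
    ⟨i, mem_univ i, mul_pos ((hw.1 i).lt_of_ne' hi) (hf i)⟩

theorem reweight_mem_stdSimplex (hw : w ∈ stdSimplex ℝ ι) (hf : ∀ i, 0 < f i) :
    reweight w f ∈ stdSimplex ℝ ι := by
  have hZ := sum_mul_pos_of_mem_stdSimplex hw hf
  exact ⟨fun i => div_nonneg (mul_nonneg (hw.1 i) (hf i).le) hZ.le,
    by simp only [reweight, ← sum_div, div_self hZ.ne']⟩

theorem sum_abs_reweight_sub_le {m M : ℝ} (hw : w ∈ stdSimplex ℝ ι) (hm : 0 < m)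
    (hmf : ∀ i, m ≤ f i) (hfM : ∀ i, f i ≤ M) :
    ∑ i, |reweight w f i - w i| ≤ M / m - 1 := by
  set Z := ∑ j, w j * f j
  have hw_nonneg : ∀ i ∈ univ, 0 ≤ w i := fun i _ => hw.1 i
  have hmZ : m ≤ Z := le_sum_mul_of_sum_eq_one hw_nonneg hw.2 fun i _ => hmf i
  have hZM : Z ≤ M := sum_mul_le_of_sum_eq_one hw_nonneg hw.2 fun i _ => hfM i
  have hZ : 0 < Z := hm.trans_le hmZ
  have hM : 0 < M := hZ.trans_le hZM
  have hfactor : ∀ i, |f i / Z - 1| ≤ M / m - 1 := fun i =>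
    abs_sub_one_le_of_inv_le_of_le (div_pos hM hm)
      (by rw [inv_div]; exact div_le_div₀ (hm.le.trans (hmf i)) (hmf i) hZ hZM)
      (div_le_div₀ hM.le (hfM i) hm hmZ)
  calc ∑ i, |reweight w f i - w i| = ∑ i, w i * |f i / Z - 1| := by
        refine sum_congr rfl fun i _ => ?_
        change |w i * f i / Z - w i| = _
        rw [show w i * f i / Z - w i = w i * (f i / Z - 1) by ring, abs_mul, abs_of_nonneg (hw.1 i)]
    _ ≤ M / m - 1 := sum_mul_le_of_sum_eq_one hw_nonneg hw.2 fun i _ => hfactor i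

theorem sum_abs_expUpdate_sub_le {γ r : ℝ} {e : ι → ℝ} (hw : w ∈ stdSimplex ℝ ι) (hr : 0 < r)
    (hγ : 0 ≤ γ) (he : ∀ i, r ≤ e i ∧ e i ≤ 1) :
    ∑ i, |expUpdate γ w e i - w i| ≤ exp (γ * (1 / r - r)) - 1 := by
  set D := ∑ j, w j * e j
  have hw_nonneg : ∀ i ∈ univ, 0 ≤ w i := fun i _ => hw.1 i
  have hrD : r ≤ D := le_sum_mul_of_sum_eq_one hw_nonneg hw.2 fun i _ => (he i).1
  have hD1 : D ≤ 1 := sum_mul_le_of_sum_eq_one hw_nonneg hw.2 fun i _ => (he i).2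
  have hD : 0 < D := hr.trans_le hrD
  have hγe : ∀ i, γ * r ≤ γ * e i := fun i => mul_le_mul_of_nonneg_left (he i).1 hγ
  have hγe' : ∀ i, γ * e i ≤ γ := fun i => mul_le_of_le_one_right hγ (he i).2
  have h := sum_abs_reweight_sub_le (f := fun i => exp (γ * e i / D)) hw (exp_pos (γ * r))
    (fun i => exp_le_exp.2 <| by
      simpa using div_le_div₀ ((mul_nonneg hγ hr.le).trans (hγe i)) (hγe i) hD hD1)
    (fun i => exp_le_exp.2 <| div_le_div₀ hγ (hγe' i) hr hrD)
  rwa [← exp_sub, show γ / r - γ * r = γ * (1 / r - r) by ring] at h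

end Reweight

theorem EIITC_transaction_cost_bound_general
    {ι : Type*} [Fintype ι]
    (r γ : ℝ) (hr0 : 0 < r) (hγ : 0 < γ)
    (N : ℕ)
    (s s' : ℕ → ι → ℝ) (ψ ψ' : ℕ → ι → ℝ)
    (hs_lb : ∀ k ∈ Finset.Icc 1 N, ∀ i, r ≤ s k i)
    (hs_max : ∀ k ∈ Finset.Icc 1 N, (∀ i, s k i ≤ 1) ∧ ∃ i, s k i = 1)
    (d : ℕ → ℕ) (a : ℕ → ℕ → ℝ)
    (ha_nonneg : ∀ k ∈ Finset.Icc 1 N, ∀ l ∈ Finset.Icc 1 (d k), 0 ≤ a k l)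
    (ha_sum : ∀ k ∈ Finset.Icc 1 N, ∑ l ∈ Finset.Icc 1 (d k), a k l = 1)
    (hs' : ∀ k ∈ Finset.Icc 1 N, ∀ i,
      s' (k + 1) i = ∑ l ∈ Finset.Icc 1 (d k), a k l * s (k - l + 1) i)
    (hψ1_pos : ∀ i, 0 < ψ 1 i) (hψ1_sum : ∑ i, ψ 1 i = 1)
    (hψ' : ∀ k ∈ Finset.Icc 1 N, ∀ i,
      ψ' k i = ψ k i * s k i / (∑ j, ψ k j * s k j))
    (hupdate : ∀ k ∈ Finset.Icc 1 N, ∀ i,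
      ψ (k + 1) i = ψ' k i * Real.exp (γ * s' (k + 1) i / (∑ j, ψ' k j * s' (k + 1) j)) /
        (∑ j, ψ' k j * Real.exp (γ * s' (k + 1) j / (∑ j', ψ' k j' * s' (k + 1) j')))) :
    ∀ k ∈ Finset.Icc 1 N,
      (∑ i, |ψ (k + 1) i - ψ' k i| ≤ Real.exp (γ * (1 / r - r)) - 1) ∧
      ∀ c : ℝ, c ∈ Set.Ioo (0 : ℝ) 1 → ∀ ck : ℝ,
        ck ≤ (c / (1 - c)) * ∑ i, |ψ (k + 1) i - ψ' k i| →
        ck ≤ (c / (1 - c)) * (Real.exp (γ * (1 / r - r)) - 1) := by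
  have hψ'_eq : ∀ k ∈ Icc 1 N, ψ' k = reweight (ψ k) (s k) := fun k hk => funext (hψ' k hk)
  have hψ_eq : ∀ k ∈ Icc 1 N, ψ (k + 1) = expUpdate γ (ψ' k) (s' (k + 1)) :=
    fun k hk => funext (hupdate k hk)
  have hs_pos : ∀ k ∈ Icc 1 N, ∀ i, 0 < s k i := fun k hk i => hr0.trans_le (hs_lb k hk i)
  have hs'_mem : ∀ k ∈ Icc 1 N, ∀ i, r ≤ s' (k + 1) i ∧ s' (k + 1) i ≤ 1 := by
    intro k hk i
    have hlag : ∀ l ∈ Icc 1 (d k), k - l + 1 ∈ Icc 1 N := by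
      intro l hl
      simp only [mem_Icc] at hk hl ⊢
      omega
    rw [hs' k hk i]
    exact ⟨le_sum_mul_of_sum_eq_one (ha_nonneg k hk) (ha_sum k hk)
        fun l hl => hs_lb _ (hlag l hl) i,
      sum_mul_le_of_sum_eq_one (ha_nonneg k hk) (ha_sum k hk)
        fun l hl => (hs_max _ (hlag l hl)).1 i⟩
  have hψ'_mem : ∀ k ∈ Icc 1 N, ψ' k ∈ stdSimplex ℝ ι := by
    intro k hk
    obtain ⟨hk1, hkN⟩ := mem_Icc.1 hk
    induction k, hk1 using Nat.le_induction with
    | base =>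
      rw [hψ'_eq 1 hk]
      exact reweight_mem_stdSimplex ⟨fun i => (hψ1_pos i).le, hψ1_sum⟩ (hs_pos 1 hk)
    | succ k hk1 ih =>
      have hk' : k ∈ Icc 1 N := mem_Icc.2 ⟨hk1, by omega⟩
      rw [hψ'_eq (k + 1) hk]
      refine reweight_mem_stdSimplex ?_ (hs_pos (k + 1) hk)
      rw [hψ_eq k hk']
      exact reweight_mem_stdSimplex (ih hk' (by omega)) fun i => exp_pos _
  intro k hk
  have hbound : ∑ i, |ψ (k + 1) i - ψ' k i| ≤ exp (γ * (1 / r - r)) - 1 := by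
    rw [hψ_eq k hk]
    exact sum_abs_expUpdate_sub_le (hψ'_mem k hk) hr0 hγ.le (hs'_mem k hk)
  exact ⟨hbound, fun c hc ck hck =>
    hck.trans (mul_le_mul_of_nonneg_left hbound (div_nonneg hc.1.le (sub_nonneg.2 hc.2.le)))⟩

/-- Transaction-cost bound for the EIITC update rule: on every trading day the
ℓ¹-distance between the updated portfolio `ψ_{k+1}` and the automatically reached
proportion `ψ'_k` is at most `e^{γ(1/r - r)} - 1`; hence if the transaction-cost ratio
satisfies `c_{k+1} ≤ (c/(1-c))·d(ψ_{k+1}, ψ'_k)` for some `c ∈ (0,1)`, then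
`c_{k+1} ≤ (c/(1-c))·(e^{γ(1/r - r)} - 1)`. -/
theorem EIITC_transaction_cost_bound
    {ι : Type*} [Fintype ι] [Nonempty ι]
    (r γ : ℝ) (hr0 : 0 < r) (hr1 : r < 1) (hγ : 0 < γ)
    (N : ℕ) (hN : 1 ≤ N)
    (s s' : ℕ → ι → ℝ) (ψ ψ' : ℕ → ι → ℝ)
    (hs_lb : ∀ k ∈ Finset.Icc 1 N, ∀ i, r ≤ s k i)
    (hs_max : ∀ k ∈ Finset.Icc 1 N, (∀ i, s k i ≤ 1) ∧ ∃ i, s k i = 1)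
    (d : ℕ → ℕ) (a : ℕ → ℕ → ℝ)
    (hd : ∀ k ∈ Finset.Icc 1 N, 1 ≤ d k ∧ d k ≤ k)
    (ha_nonneg : ∀ k ∈ Finset.Icc 1 N, ∀ l ∈ Finset.Icc 1 (d k), 0 ≤ a k l)
    (ha_sum : ∀ k ∈ Finset.Icc 1 N, ∑ l ∈ Finset.Icc 1 (d k), a k l = 1)
    (hs' : ∀ k ∈ Finset.Icc 1 N, ∀ i,
      s' (k + 1) i = ∑ l ∈ Finset.Icc 1 (d k), a k l * s (k - l + 1) i)
    (hψ1_pos : ∀ i, 0 < ψ 1 i) (hψ1_sum : ∑ i, ψ 1 i = 1)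
    (hψ' : ∀ k ∈ Finset.Icc 1 N, ∀ i,
      ψ' k i = ψ k i * s k i / (∑ j, ψ k j * s k j))
    (hupdate : ∀ k ∈ Finset.Icc 1 N, ∀ i,
      ψ (k + 1) i = ψ' k i * Real.exp (γ * s' (k + 1) i / (∑ j, ψ' k j * s' (k + 1) j)) /
        (∑ j, ψ' k j * Real.exp (γ * s' (k + 1) j / (∑ j', ψ' k j' * s' (k + 1) j')))) :
    ∀ k ∈ Finset.Icc 1 N,
      (∑ i, |ψ (k + 1) i - ψ' k i| ≤ Real.exp (γ * (1 / r - r)) - 1) ∧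
      ∀ c : ℝ, c ∈ Set.Ioo (0 : ℝ) 1 → ∀ ck : ℝ,
        ck ≤ (c / (1 - c)) * ∑ i, |ψ (k + 1) i - ψ' k i| →
        ck ≤ (c / (1 - c)) * (Real.exp (γ * (1 / r - r)) - 1) :=
  EIITC_transaction_cost_bound_general r γ hr0 hγ N s s' ψ ψ' hs_lb hs_max d a ha_nonneg ha_sum hs'
    hψ1_pos hψ1_sum hψ' hupdate
end

section
/- Let ι be a nonempty finite index set, let c ∈ (0,1), let p : ι → ℝ satisfy p i ≥ 0 for all i and Σ_{i∈ι} p i = 1, let A : ι → ℝ, and set Δ := Σ_{i∈ι} |A i|. If T ≥ 0 satisfies T = c · Σ_{i∈ι} |A i − T · p i|, then (c/(1+c)) · Δ ≤ T ≤ (c/(1−c)) · Δ. -/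
open Finset

/-- Bounds on the transaction cost `T`: if `T ≥ 0` is proportional (with factor
`c ∈ (0,1)`) to the traded volume `∑_i |A i - T·p i|`, where `p` is a probability
vector, then `(c/(1+c))·Δ ≤ T ≤ (c/(1-c))·Δ` with `Δ = ∑_i |A i|`. -/
theorem transaction_cost_bounds
    {ι : Type*} [Fintype ι] [Nonempty ι]
    (c : ℝ) (hc : c ∈ Set.Ioo (0 : ℝ) 1)
    (p : ι → ℝ) (hp : ∀ i, 0 ≤ p i) (hpsum : ∑ i, p i = 1)
    (A : ι → ℝ) (T : ℝ) (hT : 0 ≤ T)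
    (heq : T = c * ∑ i, |A i - T * p i|) :
    (c / (1 + c)) * (∑ i, |A i|) ≤ T ∧ T ≤ (c / (1 - c)) * (∑ i, |A i|) := by
  obtain ⟨hc0, hc1⟩ := hc
  have habs : ∀ i, T * p i = |T * p i| := fun i =>
    (abs_of_nonneg (mul_nonneg hT (hp i))).symm
  have hub : ∑ i, |A i - T * p i| ≤ (∑ i, |A i|) + T := by
    calc ∑ i, |A i - T * p i| ≤ ∑ i, (|A i| + |T * p i|) :=
          Finset.sum_le_sum fun i _ => abs_sub (A i) (T * p i)
      _ = (∑ i, |A i|) + T := by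
          rw [Finset.sum_add_distrib]
          congr 1
          simp only [← habs]
          rw [← Finset.mul_sum, hpsum, mul_one]
  have hlb : (∑ i, |A i|) - T ≤ ∑ i, |A i - T * p i| := by
    calc (∑ i, |A i|) - T = ∑ i, (|A i| - |T * p i|) := by
          rw [Finset.sum_sub_distrib]
          congr 1
          simp [← habs, ← Finset.mul_sum, hpsum]
      _ ≤ ∑ i, |A i - T * p i| :=
          Finset.sum_le_sum fun i _ => abs_sub_abs_le_abs_sub _ _
  constructor
  · rw [div_mul_eq_mul_div, div_le_iff₀ (by linarith)]
    nlinarith [mul_le_mul_of_nonneg_left hlb hc0.le]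
  · rw [div_mul_eq_mul_div, le_div_iff₀ (by linarith)]
    nlinarith [mul_le_mul_of_nonneg_left hub hc0.le]
end

section
/- Let ι be a nonempty finite index set, γ > 0, t : ι → ℝ with t i > 0 for all i, and let q : ι → ℝ satisfy q i > 0 for all i and Σ_{i∈ι} q i = 1; write q ⋄ t := Σ_{i∈ι} q i · t i. On the simplex S := { p : ι → ℝ : p i ≥ 0 for all i, Σ_i p i = 1 }, define Z(p) := γ·[ log(q ⋄ t) + ( Σ_{i∈ι} t i · (p i − q i) ) / (q ⋄ t) ] − Σ_{i∈ι} p i · log(p i / q i) (with the convention 0·log 0 = 0). Then Z attains its maximum over S at p* given by p* i := q i · exp( γ · t i / (q ⋄ t) ) / Σ_{j∈ι} q j · exp( γ · t j / (q ⋄ t) ), i.e. Z(p) ≤ Z(p*) for every p ∈ S. -/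
/-!
With `a i := γ·t i/(q⋄t)`, the objective is a constant plus `∑ p i·a i − ∑ p i·log(p i/q i)`,
and this is the Gibbs variational functional, whose maximum `log ∑ q i·exp(a i)` over the simplex
is attained at the tilted distribution `q i·exp(a i)/∑ q j·exp(a j)`: for `r` in the simplex,
`∑ r i·a i − ∑ r i·log(r i/q i) − log W = ∑ r i·log(g i/r i) ≤ ∑ (g i − r i) = 0`
by `log x ≤ x − 1`.
-/

open Finset Real

theorem Real.mul_log_div_le_sub {r c : ℝ} (hr : 0 ≤ r) (hc : 0 < c) :
    r * log (c / r) ≤ c - r := by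
  rcases hr.eq_or_lt with rfl | hr
  · simpa using hc.le
  calc r * log (c / r) ≤ r * (c / r - 1) :=
        mul_le_mul_of_nonneg_left (log_le_sub_one_of_pos (div_pos hc hr)) hr.le
    _ = c - r := by field_simp

section Gibbs

variable {ι : Type*} [Fintype ι]

noncomputable def gibbs (q a : ι → ℝ) (i : ι) : ℝ :=
  q i * exp (a i) / ∑ j, q j * exp (a j)

variable {q : ι → ℝ} (a : ι → ℝ)

theorem sum_mul_exp_pos [Nonempty ι] (hq : ∀ i, 0 < q i) : 0 < ∑ j, q j * exp (a j) :=
  sum_pos (fun j _ => mul_pos (hq j) (exp_pos _)) univ_nonempty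

theorem gibbs_pos [Nonempty ι] (hq : ∀ i, 0 < q i) (i : ι) : 0 < gibbs q a i :=
  div_pos (mul_pos (hq i) (exp_pos _)) (sum_mul_exp_pos a hq)

theorem sum_gibbs [Nonempty ι] (hq : ∀ i, 0 < q i) : ∑ i, gibbs q a i = 1 := by
  simp only [gibbs]
  rw [← sum_div, div_self (sum_mul_exp_pos a hq).ne']

theorem log_gibbs_div [Nonempty ι] (hq : ∀ i, 0 < q i) (i : ι) :
    log (gibbs q a i / q i) = a i - log (∑ j, q j * exp (a j)) := by
  have hdiv : gibbs q a i / q i = exp (a i) / ∑ j, q j * exp (a j) := by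
    rw [gibbs, div_div, mul_comm _ (q i), ← div_div, mul_div_cancel_left₀ _ (hq i).ne']
  rw [hdiv, log_div (exp_ne_zero _) (sum_mul_exp_pos a hq).ne', log_exp]

theorem sum_mul_sub_sum_mul_log_div_gibbs [Nonempty ι] (hq : ∀ i, 0 < q i) :
    ∑ i, gibbs q a i * a i - ∑ i, gibbs q a i * log (gibbs q a i / q i)
      = log (∑ j, q j * exp (a j)) := by
  simp_rw [log_gibbs_div a hq, mul_sub, sum_sub_distrib, ← sum_mul, sum_gibbs a hq]
  ring

/-- The Gibbs variational inequality: relative entropy with respect to `q` is the convex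
conjugate of `a ↦ log ∑ q i·exp(a i)`. -/
theorem sum_mul_sub_sum_mul_log_div_le [Nonempty ι] (hq : ∀ i, 0 < q i) {r : ι → ℝ}
    (hr : ∀ i, 0 ≤ r i) (hrsum : ∑ i, r i = 1) :
    ∑ i, r i * a i - ∑ i, r i * log (r i / q i) ≤ log (∑ j, q j * exp (a j)) := by
  set W := ∑ j, q j * exp (a j)
  have hterm (i : ι) : r i * (a i - log (r i / q i) - log W) = r i * log (gibbs q a i / r i) := by
    rcases (hr i).eq_or_lt with hri | hri
    · simp [← hri]
    rw [← div_div_div_cancel_right₀ (hq i).ne' (gibbs q a i) (r i),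
      log_div (div_pos (gibbs_pos a hq i) (hq i)).ne' (div_pos hri (hq i)).ne',
      log_gibbs_div a hq]
    ring
  have hsum : ∑ i, r i * (a i - log (r i / q i) - log W) ≤ 0 := calc
    _ = ∑ i, r i * log (gibbs q a i / r i) := sum_congr rfl fun i _ => hterm i
    _ ≤ ∑ i, (gibbs q a i - r i) :=
        sum_le_sum fun i _ => mul_log_div_le_sub (hr i) (gibbs_pos a hq i)
    _ = 0 := by rw [sum_sub_distrib, sum_gibbs a hq, hrsum, sub_self]
  simp_rw [mul_sub, sum_sub_distrib, ← sum_mul, hrsum, one_mul] at hsum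
  linarith

end Gibbs

theorem EIITC_update_maximizes_objective_general
    {ι : Type*} [Fintype ι] [Nonempty ι]
    (γ : ℝ) (t : ι → ℝ)
    (q : ι → ℝ) (hq : ∀ i, 0 < q i)
    (Z : (ι → ℝ) → ℝ)
    (hZ : ∀ p, Z p = γ * (Real.log (∑ i, q i * t i)
        + (∑ i, t i * (p i - q i)) / (∑ i, q i * t i))
      - ∑ i, p i * Real.log (p i / q i))
    (pstar : ι → ℝ)
    (hpstar : ∀ i, pstar i = q i * Real.exp (γ * t i / (∑ j, q j * t j)) /
        ∑ j, q j * Real.exp (γ * t j / (∑ j', q j' * t j'))) :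
    ∀ p : ι → ℝ, (∀ i, 0 ≤ p i) → ∑ i, p i = 1 → Z p ≤ Z pstar := by
  intro p hp hpsum
  set D := ∑ i, q i * t i
  set a : ι → ℝ := fun i => γ * t i / D
  have hZ_eq (r : ι → ℝ) : Z r = γ * log D - γ * (∑ i, t i * q i) / D
      + (∑ i, r i * a i - ∑ i, r i * log (r i / q i)) := by
    have hlin : ∑ i, r i * a i = γ * (∑ i, t i * r i) / D := by
      simp_rw [a, mul_sum, sum_div]
      exact sum_congr rfl fun i _ => by ring
    simp_rw [hZ, hlin, mul_sub, sum_sub_distrib]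
    ring
  have hpstar_eq : pstar = gibbs q a := funext hpstar
  rw [hZ_eq p, hZ_eq pstar, hpstar_eq, sum_mul_sub_sum_mul_log_div_gibbs a hq]
  linarith [sum_mul_sub_sum_mul_log_div_le a hq hp hpsum]

/-- The EIITC objective
`Z(p) = γ·[log(q⋄t) + (∑ t i·(p i − q i))/(q⋄t)] − ∑ p i·log(p i/q i)` attains its
maximum over the simplex at `p* i = q i·exp(γ·t i/(q⋄t)) / ∑_j q j·exp(γ·t j/(q⋄t))`.
(Note `Real.log 0 = 0` in Lean, so the convention `0·log 0 = 0` holds automatically.) -/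
theorem EIITC_update_maximizes_objective
    {ι : Type*} [Fintype ι] [Nonempty ι]
    (γ : ℝ) (hγ : 0 < γ) (t : ι → ℝ) (ht : ∀ i, 0 < t i)
    (q : ι → ℝ) (hq : ∀ i, 0 < q i) (hqsum : ∑ i, q i = 1)
    (Z : (ι → ℝ) → ℝ)
    (hZ : ∀ p, Z p = γ * (Real.log (∑ i, q i * t i)
        + (∑ i, t i * (p i - q i)) / (∑ i, q i * t i))
      - ∑ i, p i * Real.log (p i / q i))
    (pstar : ι → ℝ)
    (hpstar : ∀ i, pstar i = q i * Real.exp (γ * t i / (∑ j, q j * t j)) /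
        ∑ j, q j * Real.exp (γ * t j / (∑ j', q j' * t j'))) :
    ∀ p : ι → ℝ, (∀ i, 0 ≤ p i) → ∑ i, p i = 1 → Z p ≤ Z pstar :=
  EIITC_update_maximizes_objective_general γ t q hq Z hZ pstar hpstar
end
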